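/- arXiv:math/0112113 — 3 statements merged into one kernel-verified Lean document; each statement's English description precedes it below -/
import Mathlib

section
/- Let μ be a ℤ^p-invariant regular Borel probability measure on Ω and let F be a longitudinal (p−1)-form datum. Then the Ruelle–Sullivan pairing of the invariant measure with the longitudinal differential of F vanishes: ∫_Ω ( ∫_{[0,1]^p} (div_x F)(ω, x) dx ) dμ(ω) = 0. (This is the statement that the Ruelle–Sullivan cycle C_{μ,ℤ^p} vanishes on longitudinal d_L-coboundaries of top degree p.) -/
open MeasureTheory

noncomputable section

/-- Coercion of a lattice point `n ∈ ℤ^p` to a vector in `ℝ^p`. -/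
def latCoe {p : ℕ} (n : Fin p → ℤ) : Fin p → ℝ := fun i => (n i : ℝ)

/-- A longitudinal `p`-form datum on the mapping torus of the action `act` of `ℤ^p` on `Ω`:
a continuous real-valued function on `Ω × ℝ^p`, smooth in the `ℝ^p`-direction, with all
iterated derivatives in the `ℝ^p`-variable jointly continuous, and `ℤ^p`-equivariant. -/
def IsLongPForm (p : ℕ) {Ω : Type*} [TopologicalSpace Ω]
    (act : (Fin p → ℤ) → Ω → Ω) (h : Ω → (Fin p → ℝ) → ℝ) : Prop :=
  Continuous (fun q : Ω × (Fin p → ℝ) => h q.1 q.2) ∧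
  (∀ ω, ContDiff ℝ (⊤ : ℕ∞) (h ω)) ∧
  (∀ k : ℕ, Continuous (fun q : Ω × (Fin p → ℝ) => iteratedFDeriv ℝ k (h q.1) q.2)) ∧
  (∀ (n : Fin p → ℤ) (ω : Ω) (x : Fin p → ℝ), h (act n ω) x = h ω (x + latCoe n))

/-- A longitudinal `(p-1)`-form datum, identified with a vector-field-valued function:
a continuous map `Ω × ℝ^p → ℝ^p`, smooth in the `ℝ^p`-direction, with all iterated
derivatives in the `ℝ^p`-variable jointly continuous, and `ℤ^p`-equivariant. -/
def IsLongP1Form (p : ℕ) {Ω : Type*} [TopologicalSpace Ω]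
    (act : (Fin p → ℤ) → Ω → Ω) (F : Ω → (Fin p → ℝ) → (Fin p → ℝ)) : Prop :=
  Continuous (fun q : Ω × (Fin p → ℝ) => F q.1 q.2) ∧
  (∀ ω, ContDiff ℝ (⊤ : ℕ∞) (F ω)) ∧
  (∀ k : ℕ, Continuous (fun q : Ω × (Fin p → ℝ) => iteratedFDeriv ℝ k (F q.1) q.2)) ∧
  (∀ (n : Fin p → ℤ) (ω : Ω) (x : Fin p → ℝ), F (act n ω) x = F ω (x + latCoe n))

/-- The longitudinal differential of a longitudinal `(p-1)`-form datum: the divergence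
in the `ℝ^p`-direction. -/
def longDiv {p : ℕ} {Ω : Type*} (F : Ω → (Fin p → ℝ) → (Fin p → ℝ))
    (ω : Ω) (x : Fin p → ℝ) : ℝ :=
  ∑ i : Fin p, fderiv ℝ (F ω) x (Pi.single i 1) i

theorem stmt0' {n : ℕ} (Ω : Type*) [TopologicalSpace Ω] [CompactSpace Ω]
    [TopologicalSpace.MetrizableSpace Ω]
    [MeasurableSpace Ω] [BorelSpace Ω]
    (act : (Fin (n+1) → ℤ) → Ω → Ω)
    (hact_cont : ∀ m, Continuous (act m))
    (μ : Measure Ω) [IsProbabilityMeasure μ]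
    (hinv : ∀ (m : Fin (n+1) → ℤ) (A : Set Ω), MeasurableSet A → μ (act m ⁻¹' A) = μ A)
    (F : Ω → (Fin (n+1) → ℝ) → (Fin (n+1) → ℝ)) (hF : IsLongP1Form (n+1) act F) :
    ∫ ω, (∫ x in Set.Icc (0 : Fin (n+1) → ℝ) 1, longDiv F ω x) ∂μ = 0 := by
  obtain ⟨hFc, hFsm, -, hFeq⟩ := hF
  -- the face integrals
  set g : Fin (n+1) → ℝ → Ω → ℝ := fun i c ω =>
    ∫ y in Set.Icc (0 : Fin n → ℝ) 1, F ω (i.insertNth c y) i with hg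
  have hgcont : ∀ i c, Continuous (g i c) := by
    intro i c
    exact continuous_parametric_integral_of_continuous
      (f := fun ω y => F ω (i.insertNth c y) i)
      ((continuous_apply i).comp <| hFc.comp
        (continuous_fst.prodMk <|
          (continuous_const : Continuous fun _ : Ω × (Fin n → ℝ) => c).finInsertNth i
            continuous_snd))
      isCompact_Icc
  -- divergence theorem pointwise in ω
  have hdiv : ∀ ω, (∫ x in Set.Icc (0 : Fin (n+1) → ℝ) 1, longDiv F ω x)
      = ∑ i : Fin (n+1), (g i 1 ω - g i 0 ω) := by
    intro ω
    have hcd := hFsm ω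
    have hIc : IntegrableOn (fun x => ∑ i : Fin (n+1), fderiv ℝ (F ω) x (Pi.single i 1) i)
        (Set.Icc (0 : Fin (n+1) → ℝ) 1) := by
      apply ContinuousOn.integrableOn_compact isCompact_Icc
      apply Continuous.continuousOn
      exact continuous_finset_sum _ fun i _ =>
        (continuous_apply i).comp <|
          (ContinuousLinearMap.apply ℝ (Fin (n+1) → ℝ) (Pi.single i 1)).continuous.comp
            (hcd.continuous_fderiv (by simp))
    have h := integral_divergence_of_hasFDerivAt_off_countable
      (a := (0 : Fin (n+1) → ℝ)) (b := 1)
      (fun i => by norm_num)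
      (F ω) (fderiv ℝ (F ω)) ∅ Set.countable_empty
      hcd.continuous.continuousOn
      (fun x _ => (hcd.differentiable (by simp) x).hasFDerivAt)
      hIc
    simpa [longDiv] using h
  have key : ∀ (i : Fin (n+1)) (y : Fin n → ℝ),
      i.insertNth (0:ℝ) y + latCoe (Pi.single i 1) = i.insertNth 1 y := by
    intro i y
    funext j
    refine Fin.succAboveCases i ?_ ?_ j
    · simp [latCoe, Pi.single_apply]
    · intro k
      simp [latCoe, Pi.single_apply, Fin.succAbove_ne i k]
  -- invariance of integrals under the action
  have hmap : ∀ m, μ.map (act m) = μ := by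
    intro m
    ext A hA
    rw [Measure.map_apply (hact_cont m).measurable hA]
    exact hinv m A hA
  have hactint : ∀ (m) (G : Ω → ℝ), Continuous G → ∫ ω, G (act m ω) ∂μ = ∫ ω, G ω ∂μ := by
    intro m G hG
    conv_rhs => rw [← hmap m, integral_map (hact_cont m).aemeasurable hG.aestronglyMeasurable]
  -- face identity
  have hface : ∀ i : Fin (n+1), ∫ ω, g i 1 ω ∂μ = ∫ ω, g i 0 ω ∂μ := by
    intro i
    have h1 : ∀ ω, g i 1 ω = g i 0 (act (Pi.single i 1) ω) := by
      intro ω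
      simp only [hg]
      refine setIntegral_congr_fun measurableSet_Icc fun y _ => ?_
      rw [hFeq, key]
    calc ∫ ω, g i 1 ω ∂μ = ∫ ω, g i 0 (act (Pi.single i 1) ω) ∂μ := by
          simp only [h1]
      _ = ∫ ω, g i 0 ω ∂μ := hactint _ _ (hgcont i 0)
  have hint : ∀ i c, Integrable (g i c) μ :=
    fun i c => (hgcont i c).integrable_of_hasCompactSupport
      (HasCompactSupport.of_compactSpace _)
  calc ∫ ω, (∫ x in Set.Icc (0 : Fin (n+1) → ℝ) 1, longDiv F ω x) ∂μ
      = ∫ ω, ∑ i : Fin (n+1), (g i 1 ω - g i 0 ω) ∂μ := by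
        exact integral_congr_ae (Filter.Eventually.of_forall hdiv)
    _ = ∑ i : Fin (n+1), ∫ ω, (g i 1 ω - g i 0 ω) ∂μ :=
        integral_finset_sum _ fun i _ => (hint i 1).sub (hint i 0)
    _ = ∑ i : Fin (n+1), ((∫ ω, g i 1 ω ∂μ) - ∫ ω, g i 0 ω ∂μ) := by
        refine Finset.sum_congr rfl fun i _ => integral_sub (hint i 1) (hint i 0)
    _ = 0 := by
        refine Finset.sum_eq_zero fun i _ => ?_
        rw [hface i, sub_self]

theorem stmt0 {p : ℕ} (hp : 1 ≤ p) (Ω : Type*) [TopologicalSpace Ω] [CompactSpace Ω]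
    [TopologicalSpace.MetrizableSpace Ω] [TotallyDisconnectedSpace Ω] [Nonempty Ω] [PerfectSpace Ω]
    [MeasurableSpace Ω] [BorelSpace Ω]
    (act : (Fin p → ℤ) → Ω → Ω)
    (hact_zero : ∀ ω, act 0 ω = ω)
    (hact_add : ∀ m n ω, act (m + n) ω = act m (act n ω))
    (hact_cont : ∀ n, Continuous (act n))
    (μ : Measure Ω) [IsProbabilityMeasure μ] [μ.Regular]
    (hinv : ∀ (n : Fin p → ℤ) (A : Set Ω), MeasurableSet A → μ (act n ⁻¹' A) = μ A)
    (F : Ω → (Fin p → ℝ) → (Fin p → ℝ)) (hF : IsLongP1Form p act F) :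
    ∫ ω, (∫ x in Set.Icc (0 : Fin p → ℝ) 1, longDiv F ω x) ∂μ = 0 := by
  obtain ⟨n, rfl⟩ : ∃ n, p = n + 1 := ⟨p - 1, (Nat.succ_pred_eq_of_pos hp).symm⟩
  exact stmt0' Ω act hact_cont μ hinv F hF
end
end

section
/- Let F be a longitudinal (p−1)-form datum and let e_1, …, e_p denote the standard generators of ℤ^p. Then there exist continuous functions g_1, …, g_p : Ω → ℝ such that for every ω ∈ Ω, ∫_{[0,1]^p} (div_x F)(ω, x) dx = Σ_{i=1}^p ( g_i(e_i•ω) − g_i(ω) ). In particular the continuous function ω ↦ ∫_{[0,1]^p} (div_x F)(ω, x) dx belongs to the subgroup B, so the transform Ψ descends to a well-defined map from the top-degree longitudinal cohomology H^p_L(V, ℝ) to the coinvariants C(Ω, ℝ)_{ℤ^p}. -/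
open MeasureTheory

noncomputable section

theorem stmt1 {p : ℕ} (hp : 1 ≤ p) (Ω : Type*) [TopologicalSpace Ω] [CompactSpace Ω]
    [TopologicalSpace.MetrizableSpace Ω] [TotallyDisconnectedSpace Ω] [Nonempty Ω] [PerfectSpace Ω]
    (act : (Fin p → ℤ) → Ω → Ω)
    (hact_zero : ∀ ω, act 0 ω = ω)
    (hact_add : ∀ m n ω, act (m + n) ω = act m (act n ω))
    (hact_cont : ∀ n, Continuous (act n))
    (F : Ω → (Fin p → ℝ) → (Fin p → ℝ)) (hF : IsLongP1Form p act F) :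
    ∃ g : Fin p → Ω → ℝ, (∀ i, Continuous (g i)) ∧
      ∀ ω : Ω, (∫ x in Set.Icc (0 : Fin p → ℝ) 1, longDiv F ω x) =
        ∑ i : Fin p, (g i (act (Pi.single i 1) ω) - g i ω) := by
  obtain ⟨n, rfl⟩ : ∃ n, p = n + 1 := ⟨p - 1, (Nat.succ_pred_eq_of_pos hp).symm⟩
  obtain ⟨hFc, hFs, hFd, hFe⟩ := hF
  -- key arithmetic identity for insertNth
  have hins : ∀ (i : Fin (n + 1)) (x : Fin n → ℝ),
      i.insertNth (0 : ℝ) x + latCoe (Pi.single i 1) = i.insertNth 1 x := by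
    intro i x
    funext j
    refine Fin.succAboveCases i ?_ ?_ j
    · simp [latCoe, Fin.insertNth_apply_same]
    · intro k
      simp [latCoe, Fin.insertNth_apply_succAbove,
        Pi.single_eq_of_ne (Fin.succAbove_ne i k)]
  refine ⟨fun i ω => ∫ x in Set.Icc (0 : Fin n → ℝ) 1, F ω (i.insertNth 0 x) i, ?_, ?_⟩
  · -- continuity of each g i
    intro i
    have hGcont : Continuous fun q : Ω × (Fin n → ℝ) => F q.1 (i.insertNth 0 q.2) i :=
      (continuous_apply i).comp <| hFc.comp <| continuous_fst.prodMk <|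
        (Continuous.finInsertNth i continuous_const continuous_snd)
    obtain ⟨C, hC⟩ := (isCompact_univ.prod (isCompact_Icc
        (a := (0 : Fin n → ℝ)) (b := 1))).exists_bound_of_continuousOn hGcont.continuousOn
    refine MeasureTheory.continuous_of_dominated (bound := fun _ => C) ?_ ?_ ?_ ?_
    · intro ω
      exact ((hGcont.comp (Continuous.prodMk_right ω)).aestronglyMeasurable)
    · intro ω
      refine MeasureTheory.ae_restrict_of_forall_mem measurableSet_Icc fun x hx => ?_
      exact hC (ω, x) ⟨Set.mem_univ _, hx⟩
    · exact MeasureTheory.integrableOn_const isCompact_Icc.measure_lt_top.ne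
    · refine Filter.Eventually.of_forall fun x => ?_
      exact hGcont.comp (continuous_id.prodMk continuous_const)
  · intro ω
    have hdiff := (hFs ω).differentiable (by simp)
    have hdc : Continuous fun x : Fin (n + 1) → ℝ =>
        ∑ i : Fin (n + 1), fderiv ℝ (F ω) x (Pi.single i 1) i := by
      refine continuous_finset_sum _ fun i _ => ?_
      exact (continuous_apply i).comp
        (((hFs ω).continuous_fderiv (by simp)).clm_apply continuous_const)
    have hle : (0 : Fin (n + 1) → ℝ) ≤ 1 := fun _ => zero_le_one
    have H := MeasureTheory.integral_divergence_of_hasFDerivAt_off_countable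
      (a := (0 : Fin (n + 1) → ℝ)) (b := 1) hle (F ω) (fderiv ℝ (F ω)) ∅
      Set.countable_empty (hFs ω).continuous.continuousOn
      (fun x _ => (hdiff x).hasFDerivAt)
      (hdc.continuousOn.integrableOn_compact isCompact_Icc)
    have hfaces : ∀ i : Fin (n + 1),
        Set.Icc ((0 : Fin (n + 1) → ℝ) ∘ i.succAbove) ((1 : Fin (n + 1) → ℝ) ∘ i.succAbove)
          = Set.Icc (0 : Fin n → ℝ) 1 := fun i => rfl
    have hshift : ∀ (i : Fin (n + 1)) (x : Fin n → ℝ),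
        F ω (i.insertNth ((1 : Fin (n + 1) → ℝ) i) x) i
          = F (act (Pi.single i 1) ω) (i.insertNth 0 x) i := by
      intro i x
      rw [hFe, hins]
      rfl
    calc (∫ x in Set.Icc (0 : Fin (n + 1) → ℝ) 1, longDiv F ω x)
        = ∫ x in Set.Icc (0 : Fin (n + 1) → ℝ) 1,
            ∑ i : Fin (n + 1), fderiv ℝ (F ω) x (Pi.single i 1) i := rfl
      _ = _ := by
          rw [H]
          refine Finset.sum_congr rfl fun i _ => ?_
          rw [hfaces i]
          congr 1
          · exact MeasureTheory.setIntegral_congr_fun measurableSet_Icc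
              fun x _ => hshift i x
end
end

section
/- Let μ be a ℤ^p-invariant regular Borel probability measure on Ω, let h be a ℤ^p-equivariant continuous function h : Ω × ℝ^p → ℝ (i.e. h(n•ω, x) = h(ω, x + n) for all n ∈ ℤ^p), and let χ' : ℝ^p → ℝ be any continuous compactly supported function satisfying Σ_{n ∈ ℤ^p} χ'(x + n) = 1 for all x ∈ ℝ^p. Then ∫_Ω ∫_{ℝ^p} χ'(x) h(ω, x) dx dμ(ω) = ∫_Ω ∫_{[0,1]^p} h(ω, x) dx dμ(ω). (This expresses that the Ruelle–Sullivan pairing C_{μ,ℤ^p} is independent of the choice of the cut-off function implementing a fundamental domain of the ℤ^p-action on ℝ^p.) -/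
/-!
Averaging over `Ω` turns `h` into `H x = ∫ h(ω, x) dμ(ω)`, which is `ℤ^p`-periodic because `μ` is
invariant and `h` equivariant. By Fubini the two sides are `∫ χ' H` and `∫_{[0,1]^p} H`. Unfolding
`∫ χ' H` over the fundamental domain `[0,1)^p` of `ℤ^p` gives
`∫_{[0,1)^p} (∑ₙ χ'(x + n)) H x dx = ∫_{[0,1)^p} H`.
-/

open MeasureTheory

noncomputable section

namespace MeasureTheory.IsAddFundamentalDomain

variable {G α : Type*} [AddGroup G] [Countable G] [AddAction G α] [MeasurableSpace α]
  [MeasurableConstVAdd G α] {μ : Measure α} [VAddInvariantMeasure G α μ] {s : Set α}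

/-- Exchanging `∑'` and `∫` is legitimate because `∑ g, ∫⁻ x in s, ‖f (g +ᵥ x)‖ₑ = ∫⁻ x, ‖f x‖ₑ`. -/
theorem integral_eq_setIntegral_tsum (h : IsAddFundamentalDomain G s μ) {f : α → ℝ}
    (hf : Integrable f μ) : ∫ x, f x ∂μ = ∫ x in s, ∑' g : G, f (g +ᵥ x) ∂μ := by
  rw [h.integral_eq_tsum'' f hf, integral_tsum]
  · exact fun g ↦ (hf.1.comp_quasiMeasurePreserving
      (measurePreserving_vadd g μ).quasiMeasurePreserving).restrict
  · rw [← h.lintegral_eq_tsum'' (‖f ·‖ₑ)]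
    exact hf.2.ne

theorem integral_mul_eq_setIntegral (h : IsAddFundamentalDomain G s μ) {χ H : α → ℝ}
    (hH : ∀ (g : G) x, H (g +ᵥ x) = H x) (hχ : ∀ x, ∑' g : G, χ (g +ᵥ x) = 1)
    (hint : Integrable (fun x ↦ χ x * H x) μ) : ∫ x, χ x * H x ∂μ = ∫ x in s, H x ∂μ := by
  rw [h.integral_eq_setIntegral_tsum hint]
  congr 1 with x
  simp only [hH, tsum_mul_right, hχ, one_mul]

end MeasureTheory.IsAddFundamentalDomain

abbrev unitLattice (p : ℕ) : AddSubgroup (Fin p → ℝ) :=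
  (Submodule.span ℤ (Set.range (Pi.basisFun ℝ (Fin p)))).toAddSubgroup

def latticeEquiv (p : ℕ) : (Fin p → ℤ) ≃ unitLattice p :=
  ((Pi.basisFun ℝ (Fin p)).restrictScalars ℤ).equivFun.symm.toEquiv

instance (p : ℕ) : Countable (unitLattice p) :=
  (latticeEquiv p).symm.injective.countable

@[simp]
theorem coe_latticeEquiv {p : ℕ} (n : Fin p → ℤ) :
    (latticeEquiv p n : Fin p → ℝ) = latCoe n := by
  ext i
  simp [latticeEquiv, latCoe, Pi.single_apply]

theorem integral_mul_eq_setIntegral_Icc_of_periodic {p : ℕ} {χ H : (Fin p → ℝ) → ℝ}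
    (hH : ∀ n x, H (x + latCoe n) = H x) (hχ : ∀ x, ∑' n, χ (x + latCoe n) = 1)
    (hint : Integrable (fun x ↦ χ x * H x)) : ∫ x, χ x * H x = ∫ x in Set.Icc 0 1, H x := by
  have hF := ZSpan.isAddFundamentalDomain' (Pi.basisFun ℝ (Fin p)) volume
  rw [ZSpan.fundamentalDomain_pi_basisFun] at hF
  refine (hF.integral_mul_eq_setIntegral ?_ (fun x ↦ ?_) hint).trans
    (setIntegral_congr_set Measure.univ_pi_Ico_ae_eq_Icc)
  · intro g x
    obtain ⟨n, rfl⟩ := (latticeEquiv p).surjective g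
    rw [AddSubgroup.vadd_def, vadd_eq_add, coe_latticeEquiv, add_comm, hH]
  · rw [← (latticeEquiv p).tsum_eq, ← hχ x]
    simp only [AddSubgroup.vadd_def, vadd_eq_add, coe_latticeEquiv, add_comm _ x]

section Fubini

variable {Ω X : Type*} [TopologicalSpace Ω] [CompactSpace Ω] [MeasurableSpace Ω]
  [OpensMeasurableSpace Ω] [T2Space Ω] {μ : Measure Ω} [IsFiniteMeasure μ]
  [TopologicalSpace X] [T2Space X] [SecondCountableTopology X] [MeasurableSpace X]
  [OpensMeasurableSpace X]
  {ν : Measure X} [IsFiniteMeasureOnCompacts ν] [SFinite ν]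
  {F : Ω → X → ℝ}

theorem integral_integral_mul_swap_of_hasCompactSupport (hF : Continuous (Function.uncurry F))
    {χ : X → ℝ} (hχ : Continuous χ) (hχ_supp : HasCompactSupport χ) :
    ∫ ω, ∫ x, χ x * F ω x ∂ν ∂μ = ∫ x, χ x * ∫ ω, F ω x ∂μ ∂ν := by
  have hint : Integrable (Function.uncurry fun ω x ↦ χ x * F ω x) (μ.prod ν) :=
    (((hχ.comp continuous_snd).mul hF).continuousOn.integrableOn_compact
      (isCompact_univ.prod hχ_supp)).integrable_of_forall_notMem_eq_zero fun q hq ↦ by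
        simp [Function.uncurry, image_eq_zero_of_notMem_tsupport fun hmem ↦ hq ⟨trivial, hmem⟩]
  rw [integral_integral_swap hint]
  simp only [integral_const_mul]

theorem integral_setIntegral_swap_of_isCompact (hF : Continuous (Function.uncurry F)) {K : Set X}
    (hK : IsCompact K) :
    ∫ ω, ∫ x in K, F ω x ∂ν ∂μ = ∫ x in K, ∫ ω, F ω x ∂μ ∂ν := by
  refine integral_integral_swap ?_
  rw [← Measure.restrict_univ (μ := μ), Measure.prod_restrict]
  exact hF.continuousOn.integrableOn_compact (isCompact_univ.prod hK)

end Fubini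

theorem integral_add_latCoe_eq_of_equivariant {p : ℕ} {Ω : Type*} [TopologicalSpace Ω]
    [MeasurableSpace Ω] [BorelSpace Ω] {act : (Fin p → ℤ) → Ω → Ω}
    (hact_cont : ∀ n, Continuous (act n)) {μ : Measure Ω}
    (hinv : ∀ (n : Fin p → ℤ) (A : Set Ω), MeasurableSet A → μ (act n ⁻¹' A) = μ A)
    {h : Ω → (Fin p → ℝ) → ℝ} (hcont : ∀ x, Continuous fun ω ↦ h ω x)
    (hequiv : ∀ (n : Fin p → ℤ) (ω : Ω) (x : Fin p → ℝ), h (act n ω) x = h ω (x + latCoe n))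
    (n : Fin p → ℤ) (x : Fin p → ℝ) : ∫ ω, h ω (x + latCoe n) ∂μ = ∫ ω, h ω x ∂μ := by
  have hmeas : Measurable (act n) := (hact_cont n).measurable
  have hmap : μ.map (act n) = μ := Measure.ext fun A hA ↦ by
    rw [Measure.map_apply hmeas hA, hinv n A hA]
  simp_rw [← hequiv, ← integral_map hmeas.aemeasurable (hcont x).aestronglyMeasurable, hmap]

theorem stmt5_general {p : ℕ} (Ω : Type*) [TopologicalSpace Ω] [CompactSpace Ω]
    [TopologicalSpace.MetrizableSpace Ω]
    [MeasurableSpace Ω] [BorelSpace Ω]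
    (act : (Fin p → ℤ) → Ω → Ω)
    (hact_cont : ∀ n, Continuous (act n))
    (μ : Measure Ω) [IsProbabilityMeasure μ]
    (hinv : ∀ (n : Fin p → ℤ) (A : Set Ω), MeasurableSet A → μ (act n ⁻¹' A) = μ A)
    (h : Ω → (Fin p → ℝ) → ℝ)
    (hcont : Continuous (fun q : Ω × (Fin p → ℝ) => h q.1 q.2))
    (hequiv : ∀ (n : Fin p → ℤ) (ω : Ω) (x : Fin p → ℝ), h (act n ω) x = h ω (x + latCoe n))
    (χ' : (Fin p → ℝ) → ℝ) (hχcont : Continuous χ') (hχsupp : HasCompactSupport χ')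
    (hχsum : ∀ x : Fin p → ℝ, ∑' n : Fin p → ℤ, χ' (x + latCoe n) = 1) :
    ∫ ω, (∫ x, χ' x * h ω x) ∂μ = ∫ ω, (∫ x in Set.Icc (0 : Fin p → ℝ) 1, h ω x) ∂μ := by
  have hH_cont : Continuous fun x ↦ ∫ ω, h ω x ∂μ := by
    simpa using continuous_parametric_integral_of_continuous (μ := μ)
      (f := fun x ω ↦ h ω x) (hcont.comp continuous_swap) isCompact_univ
  rw [integral_integral_mul_swap_of_hasCompactSupport hcont hχcont hχsupp,
    integral_setIntegral_swap_of_isCompact hcont isCompact_Icc]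
  exact integral_mul_eq_setIntegral_Icc_of_periodic
    (integral_add_latCoe_eq_of_equivariant hact_cont hinv
      (fun x ↦ hcont.comp (continuous_id.prodMk continuous_const)) hequiv) hχsum
    ((hχcont.mul hH_cont).integrable_of_hasCompactSupport hχsupp.mul_right)

theorem stmt5 {p : ℕ} (hp : 1 ≤ p) (Ω : Type*) [TopologicalSpace Ω] [CompactSpace Ω]
    [TopologicalSpace.MetrizableSpace Ω] [TotallyDisconnectedSpace Ω] [Nonempty Ω] [PerfectSpace Ω]
    [MeasurableSpace Ω] [BorelSpace Ω]
    (act : (Fin p → ℤ) → Ω → Ω)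
    (hact_zero : ∀ ω, act 0 ω = ω)
    (hact_add : ∀ m n ω, act (m + n) ω = act m (act n ω))
    (hact_cont : ∀ n, Continuous (act n))
    (μ : Measure Ω) [IsProbabilityMeasure μ] [μ.Regular]
    (hinv : ∀ (n : Fin p → ℤ) (A : Set Ω), MeasurableSet A → μ (act n ⁻¹' A) = μ A)
    (h : Ω → (Fin p → ℝ) → ℝ)
    (hcont : Continuous (fun q : Ω × (Fin p → ℝ) => h q.1 q.2))
    (hequiv : ∀ (n : Fin p → ℤ) (ω : Ω) (x : Fin p → ℝ), h (act n ω) x = h ω (x + latCoe n))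
    (χ' : (Fin p → ℝ) → ℝ) (hχcont : Continuous χ') (hχsupp : HasCompactSupport χ')
    (hχsum : ∀ x : Fin p → ℝ, ∑' n : Fin p → ℤ, χ' (x + latCoe n) = 1) :
    ∫ ω, (∫ x, χ' x * h ω x) ∂μ = ∫ ω, (∫ x in Set.Icc (0 : Fin p → ℝ) 1, h ω x) ∂μ :=
  stmt5_general Ω act hact_cont μ hinv h hcont hequiv χ' hχcont hχsupp hχsum
end
end
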